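/- For q ≥ 1/2 set s = (q+1)/2, t = q/2, w = √((2q−1)(q+1))/2, and let V(q) be the 6×6 real matrix with 2×2 blocks V(q) = [[qI, wR, wR],[wR, sI, tI],[wR, tI, sI]], where I is the 2×2 identity and R = diag(1,−1). Let J be the 6×6 block-diagonal matrix diag(Ω, Ω, Ω) with Ω = [[0,−1],[1,0]]. Then for every q ≥ 1/2 the 6×6 complex Hermitian matrix V(q) − (i/2)·J is positive semidefinite, i.e. V(q) is a genuine three-mode correlation matrix. -/

import Mathlib

open Matrix ComplexOrder

/-- The 2×2 real matrix `Ω = [[0,-1],[1,0]]`. -/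
def Om : Matrix (Fin 2) (Fin 2) ℝ := !![0, -1; 1, 0]

/-- `R = diag(1,−1)`. -/
def Rm : Matrix (Fin 2) (Fin 2) ℝ := !![1, 0; 0, -1]

/-- Assemble a 3×3 array of 2×2 blocks into a 6×6 matrix (indexed by `Fin 3 × Fin 2`). -/
def blockMat (B : Matrix (Fin 3) (Fin 3) (Matrix (Fin 2) (Fin 2) ℝ)) :
    Matrix (Fin 3 × Fin 2) (Fin 3 × Fin 2) ℝ :=
  Matrix.of fun p r => B p.1 r.1 p.2 r.2

/-- The `q`-dependent three-mode correlation matrix of Section V.A: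
`V(q) = [[qI, wR, wR],[wR, sI, tI],[wR, tI, sI]]` with `s = (q+1)/2`, `t = q/2`,
`w = √((2q−1)(q+1))/2`. -/
noncomputable def Vq (q : ℝ) : Matrix (Fin 3 × Fin 2) (Fin 3 × Fin 2) ℝ :=
  blockMat
    !![q • (1 : Matrix (Fin 2) (Fin 2) ℝ), (Real.sqrt ((2*q - 1)*(q + 1)) / 2) • Rm,
          (Real.sqrt ((2*q - 1)*(q + 1)) / 2) • Rm;
       (Real.sqrt ((2*q - 1)*(q + 1)) / 2) • Rm, ((q + 1)/2) • 1, (q/2) • 1;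
       (Real.sqrt ((2*q - 1)*(q + 1)) / 2) • Rm, (q/2) • 1, ((q + 1)/2) • 1]

/-- The 6×6 symplectic form `J = diag(Ω, Ω, Ω)`. -/
def Jmat : Matrix (Fin 3 × Fin 2) (Fin 3 × Fin 2) ℝ :=
  blockMat !![Om, 0, 0; 0, Om, 0; 0, 0, Om]

lemma fin3_mk_two (h : 2 < 3) : (⟨2, h⟩ : Fin 3) = 2 := rfl

lemma eq_of_sq_eq_sq_aux {a b : ℝ} (ha : 0 ≤ a) (hb : 0 ≤ b) (h : a ^ 2 = b ^ 2) : a = b := by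
  have h' : (a - b) * (a + b) = 0 := by linear_combination h
  rcases mul_eq_zero.mp h' with h0 | h0 <;> linarith

/-- Assemble a 3×3 array of 2×2 complex blocks into a 6×6 matrix. -/
def cblock (B : Matrix (Fin 3) (Fin 3) (Matrix (Fin 2) (Fin 2) ℂ)) :
    Matrix (Fin 3 × Fin 2) (Fin 3 × Fin 2) ℂ :=
  Matrix.of fun p r => B p.1 r.1 p.2 r.2

/-- A Cholesky-type factor for `V(q) − (i/2)J`. -/
noncomputable def Lfac (q : ℝ) : Matrix (Fin 3 × Fin 2) (Fin 3 × Fin 2) ℂ :=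
  cblock
    !![!![0, 0;
         (Real.sqrt 2 : ℝ) * (Real.sqrt (q - 1/2) : ℝ) / 2,
         -(Complex.I * ((Real.sqrt 2 : ℝ) * (Real.sqrt (q - 1/2) : ℝ) / 2))],
       !![1/2, Complex.I/2;
         (Real.sqrt (q + 1) : ℝ) / 2, Complex.I * ((Real.sqrt (q + 1) : ℝ) / 2)],
       !![-(1/2), -(Complex.I/2);
         (Real.sqrt (q + 1) : ℝ) / 2, Complex.I * ((Real.sqrt (q + 1) : ℝ) / 2)];
       !![(Real.sqrt 2 : ℝ) * (Real.sqrt (q + 1/2) : ℝ) / 2,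
         Complex.I * ((Real.sqrt 2 : ℝ) * (Real.sqrt (q + 1/2) : ℝ) / 2);
         0, 0],
       !![((Real.sqrt ((2*q - 1)*(q + 1)/(4*(2*q+1))) : ℝ) : ℂ),
         -(Complex.I * ((Real.sqrt ((2*q - 1)*(q + 1)/(4*(2*q+1))) : ℝ) : ℂ));
         ((Real.sqrt (1/(4*(2*q+1))) : ℝ) : ℂ),
         -(Complex.I * ((Real.sqrt (1/(4*(2*q+1))) : ℝ) : ℂ))],
       !![((Real.sqrt ((2*q - 1)*(q + 1)/(4*(2*q+1))) : ℝ) : ℂ),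
         -(Complex.I * ((Real.sqrt ((2*q - 1)*(q + 1)/(4*(2*q+1))) : ℝ) : ℂ));
         ((Real.sqrt (1/(4*(2*q+1))) : ℝ) : ℂ),
         -(Complex.I * ((Real.sqrt (1/(4*(2*q+1))) : ℝ) : ℂ))];
       0, 0, 0]

set_option maxHeartbeats 2000000 in
/-- For every `q ≥ 1/2`, `V(q) − (i/2) J` is positive semidefinite, i.e. `V(q)` is a genuine
three-mode correlation matrix. -/
theorem Vq_genuine (q : ℝ) (hq : 1/2 ≤ q) :
    ((Vq q).map (Complex.ofReal) - (Complex.I / 2) • Jmat.map (Complex.ofReal)).PosSemidef := by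
  have h1 : (0:ℝ) ≤ q - 1/2 := by linarith
  have h2 : (0:ℝ) ≤ q + 1 := by linarith
  have h3 : (0:ℝ) ≤ q + 1/2 := by linarith
  have h4 : (0:ℝ) ≤ (2*q - 1)*(q + 1) := mul_nonneg (by linarith) h2
  have h6 : (0:ℝ) < 2*q+1 := by linarith
  have h5 : (0:ℝ) ≤ (2*q - 1)*(q + 1)/(4*(2*q+1)) := div_nonneg h4 (by linarith)
  have h7 : (0:ℝ) ≤ 1/(4*(2*q+1)) := by positivity
  -- real square facts
  have Rb : Real.sqrt (q - 1/2) ^ 2 = q - 1/2 := Real.sq_sqrt h1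
  have Rg : Real.sqrt (q + 1) ^ 2 = q + 1 := Real.sq_sqrt h2
  have Rd : Real.sqrt (q + 1/2) ^ 2 = q + 1/2 := Real.sq_sqrt h3
  have Rs2 : Real.sqrt 2 ^ 2 = 2 := Real.sq_sqrt (by norm_num)
  have Rw : Real.sqrt ((2*q - 1)*(q + 1)) ^ 2 = (2*q - 1)*(q + 1) := Real.sq_sqrt h4
  have Rc : Real.sqrt ((2*q - 1)*(q + 1)/(4*(2*q+1))) ^ 2 = (2*q - 1)*(q + 1)/(4*(2*q+1)) :=
    Real.sq_sqrt h5
  have Re : Real.sqrt (1/(4*(2*q+1))) ^ 2 = 1/(4*(2*q+1)) := Real.sq_sqrt h7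
  -- product facts, by squaring
  have R3 : Real.sqrt 2 * Real.sqrt (q - 1/2) * Real.sqrt (q + 1)
      = Real.sqrt ((2*q - 1)*(q + 1)) := by
    apply eq_of_sq_eq_sq_aux (by positivity) (Real.sqrt_nonneg _)
    rw [mul_pow, mul_pow, Rb, Rg, Rs2, Rw]; ring
  have R4 : Real.sqrt 2 * Real.sqrt (q + 1/2) * Real.sqrt ((2*q - 1)*(q + 1)/(4*(2*q+1)))
      = Real.sqrt ((2*q - 1)*(q + 1)) / 2 := by
    apply eq_of_sq_eq_sq_aux (by positivity) (by positivity)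
    rw [div_pow, mul_pow, mul_pow, Rd, Rs2, Rc, Rw]
    field_simp
    ring
  have Rcc : Real.sqrt ((2*q - 1)*(q + 1)/(4*(2*q+1))) ^ 2 + Real.sqrt (1/(4*(2*q+1))) ^ 2
      = q / 4 := by
    rw [Rc, Re]
    field_simp
    ring
  -- complex versions
  have Hb : ((Real.sqrt (q - 1/2) : ℝ) : ℂ) ^ 2 = (q:ℂ) - 1/2 := by have h := congrArg Complex.ofReal Rb; push_cast at h; exact_mod_cast h
  have Hg : ((Real.sqrt (q + 1) : ℝ) : ℂ) ^ 2 = (q:ℂ) + 1 := by have h := congrArg Complex.ofReal Rg; push_cast at h; exact_mod_cast h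
  have Hd : ((Real.sqrt (q + 1/2) : ℝ) : ℂ) ^ 2 = (q:ℂ) + 1/2 := by have h := congrArg Complex.ofReal Rd; push_cast at h; exact_mod_cast h
  have Hs2 : ((Real.sqrt 2 : ℝ) : ℂ) ^ 2 = 2 := by have h := congrArg Complex.ofReal Rs2; push_cast at h; exact_mod_cast Rs2
  have H3 : ((Real.sqrt 2 : ℝ) : ℂ) * (Real.sqrt (q - 1/2) : ℝ) * (Real.sqrt (q + 1) : ℝ)
      = ((Real.sqrt ((2*q - 1)*(q + 1)) : ℝ) : ℂ) := by have h := congrArg Complex.ofReal R3; push_cast at h; exact_mod_cast h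
  have H4 : ((Real.sqrt 2 : ℝ) : ℂ) * (Real.sqrt (q + 1/2) : ℝ)
        * (Real.sqrt ((2*q - 1)*(q + 1)/(4*(2*q+1))) : ℝ)
      = ((Real.sqrt ((2*q - 1)*(q + 1)) : ℝ) : ℂ) / 2 := by have h := congrArg Complex.ofReal R4; push_cast at h; exact_mod_cast R4
  have Hcc : ((Real.sqrt ((2*q - 1)*(q + 1)/(4*(2*q+1))) : ℝ) : ℂ) ^ 2
        + ((Real.sqrt (1/(4*(2*q+1))) : ℝ) : ℂ) ^ 2 = (q:ℂ) / 4 := by have h := congrArg Complex.ofReal Rcc; push_cast at h; exact_mod_cast Rcc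
  -- combined complex identities
  have G1 : ((Real.sqrt 2 : ℝ) : ℂ) ^ 2 * ((Real.sqrt (q - 1/2) : ℝ) : ℂ) ^ 2 / 4
        + ((Real.sqrt 2 : ℝ) : ℂ) ^ 2 * ((Real.sqrt (q + 1/2) : ℝ) : ℂ) ^ 2 / 4 = (q:ℂ) := by
    linear_combination ((((Real.sqrt (q - 1/2) : ℝ) : ℂ))^2/4
        + (((Real.sqrt (q + 1/2) : ℝ) : ℂ))^2/4) * Hs2 + Hb/2 + Hd/2
  have G2 : ((Real.sqrt 2 : ℝ) : ℂ) ^ 2 * ((Real.sqrt (q + 1/2) : ℝ) : ℂ) ^ 2 / 4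
        - ((Real.sqrt 2 : ℝ) : ℂ) ^ 2 * ((Real.sqrt (q - 1/2) : ℝ) : ℂ) ^ 2 / 4 = 1/2 := by
    linear_combination ((((Real.sqrt (q + 1/2) : ℝ) : ℂ))^2/4
        - (((Real.sqrt (q - 1/2) : ℝ) : ℂ))^2/4) * Hs2 + Hd/2 - Hb/2
  have G3 : ((Real.sqrt 2 : ℝ) : ℂ) * ((Real.sqrt (q - 1/2) : ℝ) : ℂ)
          * ((Real.sqrt (q + 1) : ℝ) : ℂ) / 4
        + ((Real.sqrt 2 : ℝ) : ℂ) * ((Real.sqrt (q + 1/2) : ℝ) : ℂ)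
          * ((Real.sqrt ((2*q - 1)*(q + 1)/(4*(2*q+1))) : ℝ) : ℂ) / 2
      = ((Real.sqrt ((2*q - 1)*(q + 1)) : ℝ) : ℂ) / 2 := by
    linear_combination H3/4 + H4/2
  have G4 : ((Real.sqrt 2 : ℝ) : ℂ) * ((Real.sqrt (q - 1/2) : ℝ) : ℂ)
          * ((Real.sqrt (q + 1) : ℝ) : ℂ) / 4
        - ((Real.sqrt 2 : ℝ) : ℂ) * ((Real.sqrt (q + 1/2) : ℝ) : ℂ)
          * ((Real.sqrt ((2*q - 1)*(q + 1)/(4*(2*q+1))) : ℝ) : ℂ) / 2 = 0 := by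
    linear_combination H3/4 - H4/2
  have G5 : 1/4 + ((Real.sqrt (q + 1) : ℝ) : ℂ) ^ 2 / 4
        + ((Real.sqrt ((2*q - 1)*(q + 1)/(4*(2*q+1))) : ℝ) : ℂ) ^ 2
        + ((Real.sqrt (1/(4*(2*q+1))) : ℝ) : ℂ) ^ 2 = ((q:ℂ) + 1)/2 := by
    linear_combination Hg/4 + Hcc
  have G6 : 1/4 + ((Real.sqrt (q + 1) : ℝ) : ℂ) ^ 2 / 4
        - ((Real.sqrt ((2*q - 1)*(q + 1)/(4*(2*q+1))) : ℝ) : ℂ) ^ 2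
        - ((Real.sqrt (1/(4*(2*q+1))) : ℝ) : ℂ) ^ 2 = 1/2 := by
    linear_combination Hg/4 - Hcc
  have HI : Complex.I ^ 2 = -1 := Complex.I_sq
  have key : (Vq q).map (Complex.ofReal) - (Complex.I / 2) • Jmat.map (Complex.ofReal)
      = (Lfac q)ᴴ * (Lfac q) := by
    refine Matrix.ext fun p k => ?_
    obtain ⟨i, a⟩ := p
    obtain ⟨j, c⟩ := k
    fin_cases i <;> fin_cases a <;> fin_cases j <;> fin_cases c <;>
      simp only [Vq, Jmat, blockMat, Lfac, cblock, Om, Rm, Matrix.sub_apply, Matrix.map_apply,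
          Matrix.smul_apply, Matrix.of_apply, Matrix.mul_apply, Matrix.conjTranspose_apply,
          Fintype.sum_prod_type, Fin.sum_univ_three, Fin.sum_univ_two, Fin.zero_eta, Fin.mk_one, fin3_mk_two,
          Fin.isValue, Fin.reduceEq, reduceIte,
          Matrix.cons_val', Matrix.cons_val_zero, Matrix.cons_val_one, Matrix.cons_val_two,
          Matrix.tail_cons, Matrix.cons_val_succ, Matrix.head_cons,
          Matrix.head_fin_const, Matrix.empty_val', Matrix.cons_val_fin_one,
          Matrix.one_apply, Matrix.zero_apply, smul_eq_mul, map_zero, Complex.star_def,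
          _root_.map_mul, map_div₀, map_neg, _root_.map_one, map_ofNat,
          Complex.conj_ofReal, Complex.conj_I] <;>
      push_cast
    · linear_combination (-1 : ℂ) * G1
    · linear_combination (-Complex.I) * G2
    · linear_combination (-1 : ℂ) * G3
    · linear_combination (-Complex.I) * G4
    · linear_combination (-1 : ℂ) * G3
    · linear_combination (-Complex.I) * G4
    · linear_combination Complex.I * G2
    · linear_combination (Complex.I^2) * G1 + (q:ℂ) * HI
    · linear_combination (-Complex.I) * G4
    · linear_combination (-(Complex.I^2)) * G3 + (-(((Real.sqrt ((2*q - 1)*(q + 1)) : ℝ) : ℂ)/2)) * HI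
    · linear_combination (-Complex.I) * G4
    · linear_combination (-(Complex.I^2)) * G3 + (-(((Real.sqrt ((2*q - 1)*(q + 1)) : ℝ) : ℂ)/2)) * HI
    · linear_combination (-1 : ℂ) * G3
    · linear_combination Complex.I * G4
    · linear_combination (-1 : ℂ) * G5
    · linear_combination (-Complex.I) * G6
    · linear_combination (-1 : ℂ) * G5
    · linear_combination (-Complex.I) * G6
    · linear_combination Complex.I * G4
    · linear_combination (-(Complex.I^2)) * G3 + (-(((Real.sqrt ((2*q - 1)*(q + 1)) : ℝ) : ℂ)/2)) * HI
    · linear_combination Complex.I * G6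
    · linear_combination (Complex.I^2) * G5 + (((q:ℂ)+1)/2) * HI
    · linear_combination Complex.I * G6
    · linear_combination (Complex.I^2) * G5 + ((q:ℂ)/2) * HI
    · linear_combination (-1 : ℂ) * G3
    · linear_combination Complex.I * G4
    · linear_combination (-1 : ℂ) * G5
    · linear_combination (-Complex.I) * G6
    · linear_combination (-1 : ℂ) * G5
    · linear_combination (-Complex.I) * G6
    · linear_combination Complex.I * G4
    · linear_combination (-(Complex.I^2)) * G3 + (-(((Real.sqrt ((2*q - 1)*(q + 1)) : ℝ) : ℂ)/2)) * HI
    · linear_combination Complex.I * G6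
    · linear_combination (Complex.I^2) * G5 + ((q:ℂ)/2) * HI
    · linear_combination Complex.I * G6
    · linear_combination (Complex.I^2) * G5 + (((q:ℂ)+1)/2) * HI
  rw [key]
  exact Matrix.posSemidef_conjTranspose_mul_self (Lfac q)
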